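/- arXiv:1610.03288 — 2 statements merged into one kernel-verified Lean document; each statement's English description precedes it below -/
import Mathlib

section
/- Let k ≥ 1 and let X ⊆ K be a subset of the Klein bottle K of cardinality k, and set X̃ := π⁻¹(X) ⊆ T. Let f be a homeomorphism of K with f(X) = X, and suppose there exists a homeomorphism f̃ of T with π ∘ f̃ = f ∘ π, f̃(X̃) = X̃, such that f̃ is isotopic to the identity of T rel X̃. Then f fixes X pointwise, i.e. f(x) = x for every x ∈ X. (This is the claim that the kernel of φ_k : MCG(K; k) → MCG(T; 2k) is contained in the pure mapping class group PMCG(K; k).) -/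
/-!
A homeomorphism isotopic to the identity rel a finite set `X̃` fixes `X̃` pointwise: for
`p ∈ X̃`, the track `t ↦ H (p, t)` of the isotopy is a path inside the finite, hence discrete,
set `X̃`, so it is constant. Since `π` has finite fibres `{p, J' p}`, `X̃ = π⁻¹(X)` is finite, so
the lift `f̃` fixes every `p ∈ X̃`, and then `f (π p) = π (f̃ p) = π p`.
-/

noncomputable section

/-- The torus `T = (ℝ/ℤ) × (ℝ/ℤ)`. -/
abbrev Torus : Type := AddCircle (1:ℝ) × AddCircle (1:ℝ)

/-- The free involution `J'(x,y) = (x + 1/2, -y)` of the torus. -/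
def kleinInvol : Torus → Torus := fun p => (p.1 + ((1/2 : ℝ) : AddCircle (1:ℝ)), -p.2)

/-- The relation identifying `p` with `J' p`. -/
def KleinRel : Torus → Torus → Prop := fun a b => b = a ∨ b = kleinInvol a

/-- The Klein bottle, as the quotient of the torus by the involution `J'`. -/
abbrev KleinBottle : Type := Quot KleinRel

/-- The orientation double covering `π : T → K`. -/
def kleinProj : Torus → KleinBottle := Quot.mk KleinRel

/-- Two self-homeomorphisms `f, g` of `M` are isotopic rel a finite set `X` if there is a
continuous map `H : M × [0,1] → M` with `H(·,0) = f`, `H(·,1) = g`, and each `H(·,t)` a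
homeomorphism of `M` mapping `X` onto `X`. -/
def IsotopyRel {M : Type*} [TopologicalSpace M] (f g : Homeomorph M M) (X : Set M) : Prop :=
  ∃ H : C(M × unitInterval, M),
    (∀ m, H (m, 0) = f m) ∧ (∀ m, H (m, 1) = g m) ∧
    (∀ t : unitInterval, ∃ h : Homeomorph M M, (∀ m, H (m, t) = h m) ∧ h '' X = X)

theorem IsotopyRel.apply_eq_of_mem {M : Type*} [TopologicalSpace M] [T1Space M]
    {f g : Homeomorph M M} {X : Set M} (hisot : IsotopyRel f g X) (hX : X.Finite)
    {m : M} (hm : m ∈ X) : f m = g m := by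
  obtain ⟨H, hH0, hH1, hHt⟩ := hisot
  have htrack_mem : ∀ t : unitInterval, H (m, t) ∈ X := by
    intro t
    obtain ⟨h, hHh, hhX⟩ := hHt t
    rw [hHh, ← hhX]
    exact Set.mem_image_of_mem h hm
  have htrack_const : H (m, 0) = H (m, 1) :=
    isPreconnected_univ.constant_of_mapsTo hX.isDiscrete
      (H.continuous.comp (Continuous.prodMk_right m)).continuousOn
      (fun t _ => htrack_mem t) (Set.mem_univ 0) (Set.mem_univ 1)
  rw [← hH0, htrack_const, hH1]

theorem kleinInvol_involutive : Function.Involutive kleinInvol := by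
  intro p
  have half_add_half : ((1/2 : ℝ) : AddCircle (1:ℝ)) + ((1/2 : ℝ) : AddCircle (1:ℝ)) = 0 := by
    rw [← AddCircle.coe_add, add_halves, AddCircle.coe_period]
  simp only [kleinInvol, add_assoc, half_add_half, add_zero, neg_neg]

theorem kleinRel_equivalence : Equivalence KleinRel where
  refl _ := Or.inl rfl
  symm := by
    rintro a b (rfl | rfl)
    · exact Or.inl rfl
    · exact Or.inr (kleinInvol_involutive a).symm
  trans := by
    rintro a b c (rfl | rfl) (rfl | rfl)
    · exact Or.inl rfl
    · exact Or.inr rfl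
    · exact Or.inr rfl
    · exact Or.inl (kleinInvol_involutive a)

theorem kleinProj_eq_iff {a b : Torus} : kleinProj a = kleinProj b ↔ KleinRel a b :=
  ⟨fun h => kleinRel_equivalence.eqvGen_iff.mp (Quot.eqvGen_exact h), Quot.sound⟩

theorem finite_preimage_kleinProj {X : Set KleinBottle} (hX : X.Finite) :
    (kleinProj ⁻¹' X).Finite := by
  refine hX.preimage' fun x _ => ?_
  obtain ⟨p, rfl⟩ := Quot.exists_rep x
  refine ((Set.finite_singleton (kleinInvol p)).insert p).subset fun q hq => ?_
  exact kleinRel_equivalence.symm (kleinProj_eq_iff.mp hq)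

theorem klein_mcg_lift_kernel_pure_general (X : Set KleinBottle)
    (hXfin : X.Finite)
    (f : Homeomorph KleinBottle KleinBottle)
    (ftil : Homeomorph Torus Torus)
    (hlift : ∀ p : Torus, kleinProj (ftil p) = f (kleinProj p))
    (hisot : IsotopyRel ftil (Homeomorph.refl Torus) (kleinProj ⁻¹' X)) :
    ∀ x ∈ X, f x = x := by
  intro x hx
  obtain ⟨p, rfl⟩ := Quot.exists_rep x
  have hfix : ftil p = p := hisot.apply_eq_of_mem (finite_preimage_kleinProj hXfin) hx
  exact (hlift p).symm.trans (congrArg kleinProj hfix)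

/-- If a homeomorphism `f` of the Klein bottle preserving a `k`-point set `X` admits a lift
`f̃` to the torus preserving `X̃ = π⁻¹(X)` that is isotopic to the identity rel `X̃`, then
`f` fixes `X` pointwise. -/
theorem klein_mcg_lift_kernel_pure (k : ℕ) (hk : 1 ≤ k) (X : Set KleinBottle)
    (hXfin : X.Finite) (hXcard : X.ncard = k)
    (f : Homeomorph KleinBottle KleinBottle) (hfX : f '' X = X)
    (ftil : Homeomorph Torus Torus)
    (hlift : ∀ p : Torus, kleinProj (ftil p) = f (kleinProj p))
    (hftilX : ftil '' (kleinProj ⁻¹' X) = kleinProj ⁻¹' X)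
    (hisot : IsotopyRel ftil (Homeomorph.refl Torus) (kleinProj ⁻¹' X)) :
    ∀ x ∈ X, f x = x :=
  klein_mcg_lift_kernel_pure_general X hXfin f ftil hlift hisot
end
end

section
/- There exist a homeomorphism h of the Klein bottle K and a homeomorphism h̃ of the torus T with π ∘ h̃ = h ∘ π, such that h̃ is isotopic to the identity of T (through homeomorphisms) but h is not isotopic to the identity of K (through homeomorphisms). (This expresses the non-injectivity of the homomorphism φ : MCG(K) → MCG(T) induced by the orientation double covering, i.e. the failure of the Birman–Chillingworth embedding in genus 2.) -/
/-!
The shift `[x, y] ↦ [x, y + 1/2]` of the Klein bottle lifts to a translation of the torus, which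
is isotopic to the identity along a path in the group. Conversely, lift a homotopy from the shift
to the identity, restricted to the loop `x ↦ [x, 0]`, through the double covering `π`: this gives
`Ψ : I × ℝ → T` starting at `(x, 1/2)`, ending on the circle `y = 0`, and equivariant,
`Ψ (t, x + 1/2) = J' (Ψ (t, x))`, by uniqueness of lifts. Lifting the second coordinate of `Ψ`
to `Y : I × ℝ → ℝ` with `Y (0, x) = 1/2`, uniqueness of lifts again gives
`Y (t, x + 1/2) = 1 - Y (t, x)`. But `Y (1, ·)` takes integer values, so it is constant, which
forces `Y (1, 0) = 1/2`.
-/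

noncomputable section

/-- Two self-homeomorphisms `f, g` of `M` are isotopic if there is a continuous map
`H : M × [0,1] → M` with `H(·,0) = f`, `H(·,1) = g`, and each `H(·,t)` a homeomorphism. -/
def Isotopic {M : Type*} [TopologicalSpace M] (f g : Homeomorph M M) : Prop :=
  ∃ H : C(M × unitInterval, M),
    (∀ m, H (m, 0) = f m) ∧ (∀ m, H (m, 1) = g m) ∧
    (∀ t : unitInterval, ∃ h : Homeomorph M M, ∀ m, H (m, t) = h m)

open Function

section InvolutionQuotient

variable {E : Type*} {σ : E → E}

theorem quot_mk_eq_quot_mk_iff_of_involutive (hσ : Involutive σ) {a b : E} :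
    Quot.mk (fun a b => b = a ∨ b = σ a) a = Quot.mk _ b ↔ b = a ∨ b = σ a := by
  have equiv : Equivalence fun a b : E => b = a ∨ b = σ a :=
    { refl := fun _ => Or.inl rfl
      symm := by rintro a b (rfl | rfl) <;> simp [hσ _]
      trans := by rintro a b c (rfl | rfl) (rfl | rfl) <;> simp [hσ _] }
  exact Quot.eq.trans equiv.eqvGen_iff

abbrev Function.Involutive.zmodTwoAddAction (hσ : Involutive σ) : AddAction (ZMod 2) E where
  vadd n x := σ^[n.val] x
  zero_vadd _ := rfl
  add_vadd m n x := by
    change σ^[(m + n).val] x = σ^[m.val] (σ^[n.val] x)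
    fin_cases m <;> fin_cases n
    exacts [rfl, rfl, rfl, (hσ x).symm]

theorem isCoveringMap_quot_mk_of_involutive [TopologicalSpace E] [T2Space E]
    [LocallyCompactSpace E] (hcont : Continuous σ) (hσ : Involutive σ) (hfree : ∀ x, σ x ≠ x) :
    IsCoveringMap (Quot.mk fun a b : E => b = a ∨ b = σ a) := by
  let := hσ.zmodTwoAddAction
  have : ContinuousConstVAdd (ZMod 2) E := ⟨fun n => hcont.iterate n.val⟩
  have : IsCancelVAdd (ZMod 2) E := isCancelVAdd_iff_eq_zero_of_vadd_eq.mpr fun n x h => by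
    fin_cases n
    · rfl
    · exact absurd h (hfree x)
  refine IsAddQuotientCoveringMap.isCoveringMap _ (ZMod 2)
    (isQuotientMap_quot_mk.isAddQuotientCoveringMap_of_properlyDiscontinuousVAdd ?_)
  intro a b
  rw [quot_mk_eq_quot_mk_iff_of_involutive hσ, AddAction.mem_orbit_iff]
  constructor
  · rintro (rfl | rfl)
    exacts [⟨0, rfl⟩, ⟨1, hσ a⟩]
  · rintro ⟨n, rfl⟩
    fin_cases n
    exacts [Or.inl rfl, Or.inr (hσ b).symm]

end InvolutionQuotient

open unitInterval

theorem Isotopic.homotopic {M : Type*} [TopologicalSpace M] {f g : M ≃ₜ M} (h : Isotopic f g) :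
    (f : C(M, M)).Homotopic g := by
  obtain ⟨H, h₀, h₁, -⟩ := h
  exact ⟨{ toContinuousMap := H.comp .prodSwap, map_zero_left := h₀, map_one_left := h₁ }⟩

theorem isotopic_addRight_refl {G : Type*} [TopologicalSpace G] [AddGroup G] [ContinuousAdd G]
    [PathConnectedSpace G] (a : G) : Isotopic (Homeomorph.addRight a) (Homeomorph.refl G) := by
  let γ := PathConnectedSpace.somePath a 0
  exact ⟨⟨fun q => q.1 + γ q.2, by fun_prop⟩, fun m => by simp, fun m => by simp,
    fun t => ⟨Homeomorph.addRight (γ t), fun _ => rfl⟩⟩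

theorem addOrderOf_coe_one_half : addOrderOf ((1 / 2 : ℝ) : AddCircle (1 : ℝ)) = 2 := by
  simpa using AddCircle.addOrderOf_period_div (p := (1 : ℝ)) two_pos

theorem coe_one_half_add_self :
    ((1 / 2 : ℝ) : AddCircle (1 : ℝ)) + ((1 / 2 : ℝ) : AddCircle (1 : ℝ)) = 0 := by
  rw [← two_nsmul, ← addOrderOf_coe_one_half, addOrderOf_nsmul_eq_zero]

theorem coe_one_half_ne_zero : ((1 / 2 : ℝ) : AddCircle (1 : ℝ)) ≠ 0 := by
  intro h
  have := addOrderOf_coe_one_half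
  rw [h, addOrderOf_zero] at this
  exact absurd this (by norm_num)

theorem neg_coe_one_half :
    -((1 / 2 : ℝ) : AddCircle (1 : ℝ)) = ((1 / 2 : ℝ) : AddCircle (1 : ℝ)) :=
  neg_eq_of_add_eq_zero_left coe_one_half_add_self

theorem continuous_kleinInvol : Continuous kleinInvol := by
  unfold kleinInvol
  fun_prop

theorem kleinInvol_involutive_s6 : Involutive kleinInvol := fun p =>
  Prod.ext (by
    change p.1 + _ + _ = p.1
    rw [add_assoc, coe_one_half_add_self, add_zero]) (neg_neg _)

theorem kleinInvol_ne_self (p : Torus) : kleinInvol p ≠ p := fun h =>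
  coe_one_half_ne_zero (by simpa [kleinInvol] using congr_arg Prod.fst h)

theorem isCoveringMap_kleinProj : IsCoveringMap kleinProj :=
  isCoveringMap_quot_mk_of_involutive continuous_kleinInvol kleinInvol_involutive_s6
    kleinInvol_ne_self

@[fun_prop]
theorem continuous_kleinProj : Continuous kleinProj :=
  continuous_quot_mk

theorem kleinProj_eq_kleinProj_iff {p q : Torus} :
    kleinProj p = kleinProj q ↔ q = p ∨ q = kleinInvol p :=
  quot_mk_eq_quot_mk_iff_of_involutive kleinInvol_involutive_s6

theorem kleinProj_kleinInvol (p : Torus) : kleinProj (kleinInvol p) = kleinProj p :=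
  (kleinProj_eq_kleinProj_iff.mpr (Or.inr rfl)).symm

def torusShift : Torus ≃ₜ Torus := Homeomorph.addRight (0, ((1 / 2 : ℝ) : AddCircle (1 : ℝ)))

theorem kleinInvol_torusShift (p : Torus) :
    kleinInvol (torusShift p) = torusShift (kleinInvol p) := by
  simp only [torusShift, Homeomorph.coe_addRight, kleinInvol]
  refine Prod.ext (add_right_comm _ _ _) ?_
  simp only [Prod.snd_add, neg_add, neg_coe_one_half]

def kleinShift : KleinBottle ≃ₜ KleinBottle :=
  Homeomorph.Quot.congr torusShift fun a b => by
    simp only [KleinRel, kleinInvol_torusShift, torusShift.injective.eq_iff]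

theorem kleinProj_torusShift (p : Torus) : kleinProj (torusShift p) = kleinShift (kleinProj p) :=
  rfl

theorem AddCircle.not_forall_eq_zero_of_antiperiodic {y : I × ℝ → AddCircle (1 : ℝ)}
    (hy : Continuous y) (h₀ : ∀ x, y (0, x) = ((1 / 2 : ℝ) : AddCircle (1 : ℝ)))
    (hanti : ∀ t x, y (t, x + 1 / 2) = -y (t, x)) : ¬ ∀ x, y (1, x) = 0 := by
  intro h₁
  have cov := AddCircle.isCoveringMap_coe (1 : ℝ)
  let Y := cov.liftHomotopy ⟨y, hy⟩ (.const ℝ (1 / 2)) h₀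
  have hY : ∀ q, (Y q : AddCircle (1 : ℝ)) = y q := congr_fun (cov.liftHomotopy_lifts ..)
  have hY₀ : ∀ x, Y (0, x) = 1 / 2 := cov.liftHomotopy_zero _ _ h₀
  have hYanti : (fun q : I × ℝ => Y (q.1, q.2 + 1 / 2)) = fun q => 1 - Y q :=
    cov.eq_of_comp_eq (by fun_prop) (by fun_prop)
      (funext fun q => by
        simp only [comp_apply, hY, hanti, AddCircle.coe_sub, AddCircle.coe_period, zero_sub])
      (0, 0) (by simp only [hY₀]; norm_num)
  have hYconst : Y (1, 1 / 2) = Y (1, 0) :=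
    cov.const_of_comp (g := fun x => Y (1, x)) (by fun_prop)
      (fun x x' => by simp [hY, h₁]) _ _
  have hYhalf : Y (1, 0) = 1 / 2 := by
    have := congr_fun hYanti (1, 0)
    simp only [zero_add] at this
    linarith
  exact coe_one_half_ne_zero (by rw [← hYhalf, hY, h₁])

theorem kleinProj_coe_add_one_half (x : ℝ) :
    kleinProj (((x + 1 / 2 : ℝ) : AddCircle (1 : ℝ)), 0) =
      kleinProj ((x : AddCircle (1 : ℝ)), 0) := by
  have : (((x + 1 / 2 : ℝ) : AddCircle (1 : ℝ)), (0 : AddCircle (1 : ℝ))) = kleinInvol (x, 0) :=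
    Prod.ext (AddCircle.coe_add ..) neg_zero.symm
  rw [this, kleinProj_kleinInvol]

theorem kleinShift_not_homotopic_id :
    ¬ (kleinShift : C(KleinBottle, KleinBottle)).Homotopic (ContinuousMap.id KleinBottle) := by
  rintro ⟨F⟩
  have cov := isCoveringMap_kleinProj
  let Φ : C(I × ℝ, KleinBottle) := F.toContinuousMap.comp
    (.prodMap (.id I) ⟨fun x => kleinProj ((x : AddCircle (1 : ℝ)), 0), by fun_prop⟩)
  let Ψ := cov.liftHomotopy Φ
    ⟨fun x => ((x : AddCircle (1 : ℝ)), ((1 / 2 : ℝ) : AddCircle (1 : ℝ))), by fun_prop⟩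
    fun x => (F.apply_zero _).trans (congr_arg kleinProj (Prod.ext (add_zero _) (zero_add _)))
  have hΨ : ∀ q, kleinProj (Ψ q) = Φ q := congr_fun (cov.liftHomotopy_lifts ..)
  have hΨ₀ : ∀ x, Ψ (0, x) = ((x : AddCircle (1 : ℝ)), ((1 / 2 : ℝ) : AddCircle (1 : ℝ))) :=
    cov.liftHomotopy_zero _ _ _
  have hΨequiv : (fun q : I × ℝ => Ψ (q.1, q.2 + 1 / 2)) = fun q => kleinInvol (Ψ q) := by
    refine cov.eq_of_comp_eq (by fun_prop) (continuous_kleinInvol.comp Ψ.continuous)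
      (funext fun q => ?_) (0, 0) ?_
    · simp only [comp_apply, hΨ, kleinProj_kleinInvol]
      exact congr_arg (fun z => F (q.1, z)) (kleinProj_coe_add_one_half q.2)
    · rw [hΨ₀, hΨ₀, zero_add]
      exact Prod.ext (zero_add _).symm neg_coe_one_half.symm
  have hΨ₁ : ∀ x, (Ψ (1, x)).2 = 0 := by
    intro x
    rcases kleinProj_eq_kleinProj_iff.mp ((hΨ (1, x)).trans (F.apply_one _)).symm with h | h
    · rw [h]
    · rw [h]
      exact neg_zero
  exact AddCircle.not_forall_eq_zero_of_antiperiodic (y := fun q => (Ψ q).2) (by fun_prop)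
    (fun x => by rw [hΨ₀]) (fun t x => congr_arg Prod.snd (congr_fun hΨequiv (t, x))) hΨ₁

/-- Non-injectivity of `φ : MCG(K) → MCG(T)`: there is a homeomorphism of the Klein bottle,
not isotopic to the identity, admitting a lift to the torus that is isotopic to the
identity. -/
theorem klein_mcg_not_injective :
    ∃ (h : Homeomorph KleinBottle KleinBottle) (htil : Homeomorph Torus Torus),
      (∀ p : Torus, kleinProj (htil p) = h (kleinProj p)) ∧
      Isotopic htil (Homeomorph.refl Torus) ∧
      ¬ Isotopic h (Homeomorph.refl KleinBottle) :=
  ⟨kleinShift, torusShift, kleinProj_torusShift, isotopic_addRight_refl _,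
    fun h => kleinShift_not_homotopic_id h.homotopic⟩
end
end
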